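/- Let 0 < q < 1, set r := 2/(1-q) (so r > 2), Ω := (0,π), a(x) := r^{1-2/r}(1 - r cos²x), and u(x) := sin^r(x)/r. Then u is twice continuously differentiable on [0,π], u > 0 on (0,π), u(0) = u(π) = 0, u'(0) = u'(π) = 0, and -u''(x) = a(x) u(x)^q for all x ∈ (0,π). -/

import Mathlib

/-!
The weight is tailored to the profile `u = sinʳ / r`: one computes
`-u'' = sinʳ⁻² (1 - r cos²)`, while `q = 1 - 2/r` gives `uᵠ = sinʳ⁻² / rᵠ`, so the factor
`rᵠ = r^(1 - 2/r)` in the weight makes the two agree. Since `r > 2`, both `u` and `u'`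
vanish where `sin` does, and `u''` is continuous.
-/

open Real Set

theorem contDiff_two_of_hasDerivAt {𝕜 F : Type*} [NontriviallyNormedField 𝕜]
    [NormedAddCommGroup F] [NormedSpace 𝕜 F] {f f' f'' : 𝕜 → F}
    (hf : ∀ x, HasDerivAt f (f' x) x) (hf' : ∀ x, HasDerivAt f' (f'' x) x)
    (hf'' : Continuous f'') : ContDiff 𝕜 2 f := by
  have hderiv : deriv f = f' := funext fun x => (hf x).deriv
  have hderiv' : deriv f' = f'' := funext fun x => (hf' x).deriv
  rw [show (2 : WithTop ℕ∞) = 1 + 1 from rfl, contDiff_succ_iff_deriv, hderiv,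
    contDiff_one_iff_deriv, hderiv']
  exact ⟨fun x => (hf x).differentiableAt, by simp, fun x => (hf' x).differentiableAt, hf''⟩

theorem hasDerivAt_sin_rpow_div_self {r : ℝ} (hr : 1 ≤ r) (x : ℝ) :
    HasDerivAt (fun y => sin y ^ r / r) (sin x ^ (r - 1) * cos x) x := by
  refine (((hasDerivAt_sin x).rpow_const (Or.inr hr)).div_const r).congr_deriv ?_
  field_simp

theorem hasDerivAt_sin_rpow_sub_one_mul_cos {r : ℝ} (hr : 2 ≤ r) (x : ℝ) :
    HasDerivAt (fun y => sin y ^ (r - 1) * cos y)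
      ((r - 1) * sin x ^ (r - 2) * cos x ^ 2 - sin x ^ (r - 1) * sin x) x := by
  refine (((hasDerivAt_sin x).rpow_const (p := r - 1) (Or.inr (by linarith))).mul
    (hasDerivAt_cos x)).congr_deriv ?_
  ring_nf

theorem neg_secondDeriv_sin_rpow_div_self_eq {r x : ℝ} (hr : 0 < r) (hx : 0 < sin x) :
    -((r - 1) * sin x ^ (r - 2) * cos x ^ 2 - sin x ^ (r - 1) * sin x) =
      r ^ (1 - 2 / r) * (1 - r * cos x ^ 2) * (sin x ^ r / r) ^ (1 - 2 / r) := by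
  have hpow : (sin x ^ r / r) ^ (1 - 2 / r) = sin x ^ (r - 2) / r ^ (1 - 2 / r) := by
    rw [div_rpow (rpow_nonneg hx.le r) hr.le, ← rpow_mul hx.le]
    congr 2
    field_simp
  have hsucc : sin x ^ (r - 1) = sin x ^ (r - 2) * sin x := by
    rw [← rpow_add_one hx.ne']
    ring_nf
  rw [hpow, hsucc]
  field_simp
  linear_combination sin_sq_add_cos_sq x

theorem stmt_0 (q : ℝ) (hq0 : 0 < q) (hq1 : q < 1)
    (r : ℝ) (hr : r = 2 / (1 - q))
    (a u : ℝ → ℝ)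
    (ha : ∀ x, a x = r ^ (1 - 2 / r) * (1 - r * (Real.cos x) ^ 2))
    (hu : ∀ x, u x = (Real.sin x) ^ r / r) :
    ContDiffOn ℝ 2 u (Icc 0 π) ∧
    (∀ x ∈ Ioo 0 π, 0 < u x) ∧
    u 0 = 0 ∧ u π = 0 ∧
    deriv u 0 = 0 ∧ deriv u π = 0 ∧
    ∀ x ∈ Ioo 0 π, -deriv (deriv u) x = a x * (u x) ^ q := by
  have h1q : 0 < 1 - q := by linarith
  have hr2 : 2 < r := by rw [hr, lt_div_iff₀ h1q]; linarith
  have hq : q = 1 - 2 / r := by rw [hr]; field_simp; ring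
  obtain rfl : u = fun x => sin x ^ r / r := funext hu
  have hd1 := hasDerivAt_sin_rpow_div_self (by linarith : 1 ≤ r)
  have hd2 := hasDerivAt_sin_rpow_sub_one_mul_cos hr2.le
  have hderiv : deriv (fun x => sin x ^ r / r) = fun x => sin x ^ (r - 1) * cos x :=
    funext fun x => (hd1 x).deriv
  have hpow_zero : ∀ {s : ℝ}, 0 < s → (0 : ℝ) ^ s = 0 := fun hs => zero_rpow hs.ne'
  refine ⟨(contDiff_two_of_hasDerivAt hd1 hd2 ?_).contDiffOn, fun x hx => ?_, ?_, ?_, ?_, ?_,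
    fun x hx => ?_⟩
  · fun_prop (disch := linarith)
  · exact div_pos (rpow_pos_of_pos (sin_pos_of_pos_of_lt_pi hx.1 hx.2) r) (by linarith)
  · simp [hpow_zero (by linarith : 0 < r)]
  · simp [hpow_zero (by linarith : 0 < r)]
  · rw [hderiv]; simp [hpow_zero (by linarith : 0 < r - 1)]
  · rw [hderiv]; simp [hpow_zero (by linarith : 0 < r - 1)]
  · rw [hderiv, (hd2 x).deriv, ha, hq]
    exact neg_secondDeriv_sin_rpow_div_self_eq (by linarith) (sin_pos_of_pos_of_lt_pi hx.1 hx.2)
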